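/- If π₁ ∘ R ⪰ π₂ ∘ R (partial-sum majorization with equal totals), then for any z ∈ ℝ^n and any convex function U, ∑_{i=1}^n U((Proj_C(π₁∘R + z))_i) ≥ ∑_{i=1}^n U((Proj_C(π₂∘R + z))_i), where C is the isotonic cone. -/

import Mathlib

open Finset

/-- Prefix sum of the first `k` coordinates of `x`. -/
def psum {n : ℕ} (x : Fin n → ℝ) (k : ℕ) : ℝ :=
  ∑ i : Fin n, if (i : ℕ) < k then x i else 0

/-- Partial-sum majorization with equal totals: `x ⪰ y`. -/
def Maj {n : ℕ} (x y : Fin n → ℝ) : Prop :=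
  (∀ k, k < n → psum y k ≤ psum x k) ∧ (∑ i, x i = ∑ i, y i)

/-- The isotonic cone `{r : r 0 ≥ r 1 ≥ ... }`. -/
def IsoCone (n : ℕ) : Set (Fin n → ℝ) := {r | Antitone r}

/-- `p` is the Euclidean projection of `y` onto `C`. -/
def IsProj {n : ℕ} (C : Set (Fin n → ℝ)) (y p : Fin n → ℝ) : Prop :=
  p ∈ C ∧ ∀ q ∈ C, ∑ i, (y i - p i) ^ 2 ≤ ∑ i, (y i - q i) ^ 2

lemma psum_zero {n : ℕ} (x : Fin n → ℝ) : psum x 0 = 0 := by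
  simp [psum]

lemma psum_succ {n : ℕ} (x : Fin n → ℝ) {k : ℕ} (h : k < n) :
    psum x (k+1) = psum x k + x ⟨k, h⟩ := by
  unfold psum
  have : ∀ i : Fin n, (if (i:ℕ) < k + 1 then x i else 0)
      = (if (i:ℕ) < k then x i else 0) + (if i = ⟨k, h⟩ then x i else 0) := by
    intro i
    rcases lt_trichotomy (i:ℕ) k with hi | hi | hi
    · rw [if_pos (by omega), if_pos hi, if_neg (by simp [Fin.ext_iff]; omega)]; ring
    · rw [if_pos (by omega), if_neg (by omega), if_pos (by simp [Fin.ext_iff, hi])]; ring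
    · rw [if_neg (by omega), if_neg (by omega), if_neg (by simp [Fin.ext_iff]; omega)]; ring
  rw [Finset.sum_congr rfl (fun i _ => this i), Finset.sum_add_distrib,
    Finset.sum_ite_eq' Finset.univ (⟨k, h⟩ : Fin n) x]
  simp

lemma psum_of_le {n : ℕ} (x : Fin n → ℝ) {k : ℕ} (h : n ≤ k) :
    psum x k = ∑ i, x i := by
  unfold psum
  apply Finset.sum_congr rfl
  intro i _
  rw [if_pos (lt_of_lt_of_le i.isLt h)]

lemma expand_sq {n : ℕ} (a p v : Fin n → ℝ) (t : ℝ) :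
    ∑ i, (a i - (p i + t * v i)) ^ 2
      = ∑ i, (a i - p i) ^ 2 - 2 * t * (∑ i, (a i - p i) * v i) + t ^ 2 * ∑ i, v i ^ 2 := by
  rw [Finset.mul_sum, Finset.mul_sum, ← Finset.sum_sub_distrib, ← Finset.sum_add_distrib]
  apply Finset.sum_congr rfl
  intro i _
  ring

lemma proj_dir_le {n : ℕ} {a p : Fin n → ℝ} (h : IsProj (IsoCone n) a p) (v : Fin n → ℝ)
    (hv : ∀ t : ℝ, 0 < t → t ≤ 1 → (fun i => p i + t * v i) ∈ IsoCone n) :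
    ∑ i, (a i - p i) * v i ≤ 0 := by
  set I := ∑ i, (a i - p i) * v i with hI
  set V := ∑ i, v i ^ 2 with hV
  have hV0 : 0 ≤ V := Finset.sum_nonneg fun i _ => sq_nonneg _
  have key : ∀ t : ℝ, 0 < t → t ≤ 1 → 2 * t * I ≤ t ^ 2 * V := by
    intro t ht ht1
    have := h.2 _ (hv t ht ht1)
    rw [expand_sq] at this
    linarith
  by_contra hc
  push_neg at hc
  rcases eq_or_lt_of_le hV0 with hV0' | hV0'
  · have := key 1 one_pos le_rfl
    rw [← hV0'] at this
    nlinarith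
  · have ht : 0 < min 1 (I / V) := lt_min one_pos (div_pos hc hV0')
    have := key _ ht (min_le_left _ _)
    have h2 : min 1 (I / V) ≤ I / V := min_le_right _ _
    have h3 : min 1 (I / V) * V ≤ I := (le_div_iff₀ hV0').mp h2
    nlinarith [mul_pos ht hc, mul_le_mul_of_nonneg_left h3 ht.le]

lemma proj_dir_ge {n : ℕ} {a p : Fin n → ℝ} (h : IsProj (IsoCone n) a p) (v : Fin n → ℝ)
    (ε : ℝ) (hε : 0 < ε)
    (hv : ∀ t : ℝ, 0 < t → t ≤ ε → (fun i => p i - t * v i) ∈ IsoCone n) :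
    0 ≤ ∑ i, (a i - p i) * v i := by
  set I := ∑ i, (a i - p i) * v i with hI
  set V := ∑ i, v i ^ 2 with hV
  have hV0 : 0 ≤ V := Finset.sum_nonneg fun i _ => sq_nonneg _
  have key : ∀ t : ℝ, 0 < t → t ≤ ε → -(2 * t * I) ≤ t ^ 2 * V := by
    intro t ht ht1
    have := h.2 _ (hv t ht ht1)
    have e : ∀ i, p i - t * v i = p i + t * (- v i) := fun i => by ring
    simp only [e] at this
    rw [expand_sq] at this
    have e2 : (∑ i, (a i - p i) * -v i) = - I := by
      rw [hI, ← Finset.sum_neg_distrib]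
      exact Finset.sum_congr rfl fun i _ => by ring
    have e3 : (∑ i, (-v i) ^ 2) = V := by
      rw [hV]; exact Finset.sum_congr rfl fun i _ => by ring
    rw [e2, e3] at this
    linarith
  by_contra hc
  push_neg at hc
  rcases eq_or_lt_of_le hV0 with hV0' | hV0'
  · have := key ε hε le_rfl
    rw [← hV0'] at this
    nlinarith
  · have hc' : 0 < -I / V := div_pos (by linarith) hV0'
    have ht : 0 < min ε (-I / V) := lt_min hε hc'
    have := key _ ht (min_le_left _ _)
    have h2 : min ε (-I / V) ≤ -I / V := min_le_right _ _
    have h3 : min ε (-I / V) * V ≤ -I := (le_div_iff₀ hV0').mp h2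
    nlinarith [mul_pos ht hc', mul_le_mul_of_nonneg_left h3 ht.le]

lemma inner_indicator {n : ℕ} (a p : Fin n → ℝ) (k : ℕ) :
    ∑ i, (a i - p i) * (if (i : ℕ) < k then (1:ℝ) else 0) = psum a k - psum p k := by
  unfold psum
  rw [← Finset.sum_sub_distrib]
  apply Finset.sum_congr rfl
  intro i _
  by_cases hi : (i : ℕ) < k <;> simp [hi]

lemma psum_le_proj {n : ℕ} {a p : Fin n → ℝ} (h : IsProj (IsoCone n) a p) (k : ℕ) :
    psum a k ≤ psum p k := by
  have := proj_dir_le h (fun i => if (i : ℕ) < k then (1:ℝ) else 0) ?_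
  · rw [inner_indicator] at this; linarith
  · intro t ht ht1
    intro i j hij
    have hp := h.1 hij
    simp only
    have : (if (j:ℕ) < k then (1:ℝ) else 0) ≤ (if (i:ℕ) < k then (1:ℝ) else 0) := by
      by_cases hj : (j:ℕ) < k
      · rw [if_pos hj, if_pos (by omega : (i:ℕ) < k)]
      · rw [if_neg hj]
        by_cases hi : (i:ℕ) < k <;> simp [hi]
    nlinarith

lemma psum_total_proj {n : ℕ} {a p : Fin n → ℝ} (h : IsProj (IsoCone n) a p) :
    ∑ i, p i = ∑ i, a i := by
  have h1 := psum_le_proj h n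
  have h2 := proj_dir_ge h (fun i => if (i : ℕ) < n then (1:ℝ) else 0) 1 one_pos ?_
  · rw [inner_indicator] at h2
    rw [psum_of_le a le_rfl, psum_of_le p le_rfl] at *
    linarith
  · intro t ht ht1 i j hij
    simp only [i.isLt, j.isLt, if_true]
    exact sub_le_sub_right (h.1 hij) _

lemma psum_gap_proj {n : ℕ} {a p : Fin n → ℝ} (h : IsProj (IsoCone n) a p)
    {k : ℕ} (hk0 : 0 < k) (hk1 : k < n)
    (hgap : p ⟨k, hk1⟩ < p ⟨k-1, by omega⟩) :
    psum p k = psum a k := by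
  have h1 := psum_le_proj h k
  set ε := p ⟨k-1, by omega⟩ - p ⟨k, hk1⟩ with hε
  have hεpos : 0 < ε := by simp [hε]; linarith
  have h2 := proj_dir_ge h (fun i => if (i : ℕ) < k then (1:ℝ) else 0) ε hεpos ?_
  · rw [inner_indicator] at h2; linarith
  · intro t ht ht1 i j hij
    simp only
    by_cases hi : (i:ℕ) < k <;> by_cases hj : (j:ℕ) < k
    · rw [if_pos hi, if_pos hj]; have := h.1 hij; linarith
    · rw [if_pos hi, if_neg hj, mul_one, mul_zero, sub_zero]
      have e1 : p j ≤ p ⟨k, hk1⟩ := h.1 (by simp [Fin.le_def]; omega)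
      have e2 : p ⟨k-1, by omega⟩ ≤ p i := h.1 (by simp [Fin.le_def]; omega)
      linarith
    · omega
    · rw [if_neg hi, if_neg hj]; have := h.1 hij; simpa using this

lemma concave_interp (Q : ℕ → ℝ) {n l k m : ℕ} (hlk : l ≤ k) (hkm : k ≤ m) (hm : m ≤ n)
    (hinc : ∀ i j, i ≤ j → j + 1 ≤ n → Q (j+1) - Q j ≤ Q (i+1) - Q i) :
    ((m:ℝ) - k) * Q l + ((k:ℝ) - l) * Q m ≤ ((m:ℝ) - l) * Q k := by
  rcases eq_or_lt_of_le hlk with h | hlk'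
  · subst h; ring_nf; rfl
  rcases eq_or_lt_of_le hkm with h | hkm'
  · subst h; ring_nf; rfl
  have tel : ∀ u v : ℕ, u ≤ v → ∑ j ∈ Finset.Ico u v, (Q (j+1) - Q j) = Q v - Q u := by
    intro u v huv
    rw [Finset.sum_Ico_eq_sub _ huv, Finset.sum_range_sub, Finset.sum_range_sub]; ring
  set e := Q (k+1) - Q k with he
  have hA : ((k:ℝ) - l) * e ≤ Q k - Q l := by
    rw [← tel l k hlk]
    calc ((k:ℝ) - l) * e = ∑ _j ∈ Finset.Ico l k, e := by
          rw [Finset.sum_const, Nat.card_Ico, nsmul_eq_mul, Nat.cast_sub hlk]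
      _ ≤ _ := Finset.sum_le_sum fun j hj => by
          have hj' := Finset.mem_Ico.mp hj
          exact hinc j k hj'.2.le (by omega)
  have hB : Q m - Q k ≤ ((m:ℝ) - k) * e := by
    rw [← tel k m hkm]
    calc ∑ j ∈ Finset.Ico k m, (Q (j+1) - Q j) ≤ ∑ _j ∈ Finset.Ico k m, e :=
          Finset.sum_le_sum fun j hj => by
            have hj' := Finset.mem_Ico.mp hj
            exact hinc k j hj'.1 (by omega)
      _ = ((m:ℝ) - k) * e := by
          rw [Finset.sum_const, Nat.card_Ico, nsmul_eq_mul, Nat.cast_sub hkm]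
  have c1 : (0:ℝ) ≤ (m:ℝ) - k := by
    have : (k:ℝ) ≤ m := Nat.cast_le.mpr hkm
    linarith
  have c2 : (0:ℝ) ≤ (k:ℝ) - l := by
    have : (l:ℝ) ≤ k := Nat.cast_le.mpr hlk
    linarith
  nlinarith [mul_le_mul_of_nonneg_left hA c1, mul_le_mul_of_nonneg_left hB c2]

def GoodPt {n : ℕ} (p : Fin n → ℝ) (j : ℕ) : Prop :=
  j = 0 ∨ n ≤ j ∨
    (0 < j ∧ ∃ h : j < n, p ⟨j, h⟩ < p ⟨j - 1, lt_of_le_of_lt (Nat.sub_le j 1) h⟩)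

lemma proj_psum_mono {n : ℕ} {a₁ a₂ p₁ p₂ : Fin n → ℝ}
    (h₁ : IsProj (IsoCone n) a₁ p₁) (h₂ : IsProj (IsoCone n) a₂ p₂)
    (hmaj : ∀ k, psum a₂ k ≤ psum a₁ k) :
    ∀ k, psum p₂ k ≤ psum p₁ k := by
  intro k
  by_cases hkn : n ≤ k
  · rw [psum_of_le _ hkn, psum_of_le _ hkn, psum_total_proj h₁, psum_total_proj h₂]
    have := hmaj n
    rwa [psum_of_le _ le_rfl, psum_of_le _ le_rfl] at this
  push_neg at hkn
  set Good : ℕ → Prop := GoodPt p₂ with hGood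
  haveI : DecidablePred Good := Classical.decPred Good
  have good_eq : ∀ j, Good j → psum p₂ j = psum a₂ j := by
    intro j hj
    rw [hGood] at hj
    unfold GoodPt at hj
    rcases hj with rfl | hj | ⟨hj0, hjn, hgap⟩
    · rw [psum_zero, psum_zero]
    · rw [psum_of_le _ hj, psum_of_le _ hj, psum_total_proj h₂]
    · exact psum_gap_proj h₂ hj0 hjn hgap
  -- the key chain lemma
  have chain : ∀ j, Good j → psum p₂ j ≤ psum p₁ j := by
    intro j hj
    rw [good_eq j hj]
    exact le_trans (hmaj j) (psum_le_proj h₁ j)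
  by_cases hGk : Good k
  · exact chain k hGk
  -- find l and m
  set l := Nat.findGreatest Good k with hl
  have hGl : Good l := Nat.findGreatest_spec (Nat.zero_le k) (Or.inl rfl)
  have hlk : l ≤ k := Nat.findGreatest_le k
  have hlk' : l < k := lt_of_le_of_ne hlk (fun h => hGk (h ▸ hGl))
  have hex : ∃ d, Good (k + d) := ⟨n - k, by rw [hGood]; exact Or.inr (Or.inl (by omega))⟩
  set m := k + Nat.find hex with hm
  have hGm : Good m := Nat.find_spec hex
  have hkm : k ≤ m := Nat.le_add_right _ _
  have hkm' : k < m := lt_of_le_of_ne hkm (by rintro h; rw [← h] at hGm; exact hGk hGm)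
  have hmn : m ≤ n := by
    have : Nat.find hex ≤ n - k := Nat.find_le (by rw [hGood]; exact Or.inr (Or.inl (by omega)))
    omega
  have notGood : ∀ j, l < j → j < m → ¬ Good j := by
    intro j hj1 hj2 hGj
    rcases le_or_gt j k with hjk | hjk
    · exact Nat.findGreatest_is_greatest hj1 hjk hGj
    · have : j - k < Nat.find hex := by omega
      have := Nat.find_min hex this
      rw [show k + (j - k) = j by omega] at this
      exact this hGj
  have hln : l < n := lt_of_le_of_lt hlk hkn
  set c := p₂ ⟨l, hln⟩ with hc
  have const : ∀ j, l ≤ j → j < m → ∀ h : j < n, p₂ ⟨j, h⟩ = c := by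
    intro j hj
    induction j, hj using Nat.le_induction with
    | base => intro _ h; rfl
    | succ j hj ih =>
      intro hjm h
      have hng := notGood (j+1) (by omega) hjm
      rw [hGood] at hng
      unfold GoodPt at hng
      push_neg at hng
      have hle := hng.2.2 (by omega) h
      have hge : p₂ ⟨j+1, h⟩ ≤ p₂ ⟨j+1-1, lt_of_le_of_lt (Nat.sub_le (j+1) 1) h⟩ :=
        h₂.1 (by simp [Fin.le_def])
      have heq : p₂ ⟨j+1, h⟩ = p₂ ⟨j, by omega⟩ := by
        have := le_antisymm hge hle
        simpa using this
      rw [heq, ih (by omega) (by omega)]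
  have plin : ∀ j, l ≤ j → j ≤ m → psum p₂ j = psum p₂ l + ((j:ℝ) - l) * c := by
    intro j hj
    induction j, hj using Nat.le_induction with
    | base => intro _; ring
    | succ j hj ih =>
      intro hjm
      have hjn : j < n := by omega
      rw [psum_succ _ hjn, ih (by omega), const j hj (by omega) hjn]
      push_cast
      ring
  set Q : ℕ → ℝ := fun j => psum p₁ j with hQ
  have hinc : ∀ i j, i ≤ j → j + 1 ≤ n → Q (j+1) - Q j ≤ Q (i+1) - Q i := by
    intro i j hij hj
    have hi : i < n := by omega
    have hj' : j < n := by omega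
    simp only [hQ, psum_succ _ hi, psum_succ _ hj']
    have : p₁ ⟨j, hj'⟩ ≤ p₁ ⟨i, hi⟩ := h₁.1 (by simp [Fin.le_def]; omega)
    linarith
  have interp := concave_interp Q hlk hkm hmn hinc
  have hql : psum p₂ l ≤ Q l := chain l hGl
  have hqm : psum p₂ m ≤ Q m := chain m hGm
  have hid : ((m:ℝ) - l) * psum p₂ k = ((m:ℝ) - k) * psum p₂ l + ((k:ℝ) - l) * psum p₂ m := by
    rw [plin k hlk (le_of_lt hkm'), plin m (by omega) le_rfl]
    ring
  have c1 : (0:ℝ) < (m:ℝ) - l := by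
    have : (l:ℝ) < m := Nat.cast_lt.mpr (by omega)
    linarith
  have c2 : (0:ℝ) ≤ (m:ℝ) - k := by
    have : (k:ℝ) ≤ m := Nat.cast_le.mpr hkm
    linarith
  have c3 : (0:ℝ) ≤ (k:ℝ) - l := by
    have : (l:ℝ) ≤ k := Nat.cast_le.mpr hlk
    linarith
  have final : ((m:ℝ) - l) * psum p₂ k ≤ ((m:ℝ) - l) * Q k := by
    rw [hid]
    calc ((m:ℝ) - k) * psum p₂ l + ((k:ℝ) - l) * psum p₂ m
        ≤ ((m:ℝ) - k) * Q l + ((k:ℝ) - l) * Q m := by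
          gcongr
      _ ≤ ((m:ℝ) - l) * Q k := interp
  exact le_of_mul_le_mul_left final c1

noncomputable def sg (U : ℝ → ℝ) (a : ℝ) : ℝ :=
  sInf ((fun y => (U y - U a) / (y - a)) '' Set.Ioi a)

section sg
variable {U : ℝ → ℝ}

lemma sg_bddBelow (hU : ConvexOn ℝ Set.univ U) (a : ℝ) :
    BddBelow ((fun y => (U y - U a) / (y - a)) '' Set.Ioi a) := by
  refine ⟨(U (a-1) - U a) / ((a-1) - a), ?_⟩
  rintro s ⟨y, hy, rfl⟩
  have hy' : a < y := hy
  exact hU.secant_mono (Set.mem_univ a) (Set.mem_univ (a-1)) (Set.mem_univ y)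
    (by linarith) (by linarith) (by linarith)

lemma sg_nonempty (a : ℝ) :
    ((fun y => (U y - U a) / (y - a)) '' Set.Ioi a).Nonempty :=
  ⟨_, ⟨a + 1, by simp, rfl⟩⟩

lemma sg_le_slope (hU : ConvexOn ℝ Set.univ U) {a y : ℝ} (hy : a < y) : sg U a ≤ (U y - U a) / (y - a) :=
  csInf_le (sg_bddBelow hU a) ⟨y, hy, rfl⟩

lemma slope_le_sg (hU : ConvexOn ℝ Set.univ U) {a x : ℝ} (hx : x < a) : (U x - U a) / (x - a) ≤ sg U a := by
  apply le_csInf (sg_nonempty a)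
  rintro s ⟨y, hy, rfl⟩
  have hy' : a < y := hy
  exact hU.secant_mono (Set.mem_univ a) (Set.mem_univ x) (Set.mem_univ y)
    (by linarith) (by linarith) (by linarith)

lemma sg_subgrad (hU : ConvexOn ℝ Set.univ U) (a x : ℝ) : U a + sg U a * (x - a) ≤ U x := by
  rcases lt_trichotomy x a with h | rfl | h
  · have h1 := slope_le_sg hU h
    have h2 : x - a < 0 := by linarith
    have := mul_le_mul_of_nonpos_right h1 h2.le
    rw [div_mul_cancel₀ _ (ne_of_lt h2)] at this
    linarith
  · simp
  · have h1 := sg_le_slope hU h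
    have h2 : 0 < x - a := by linarith
    have := mul_le_mul_of_nonneg_right h1 h2.le
    rw [div_mul_cancel₀ _ (ne_of_gt h2)] at this
    linarith

lemma sg_mono (hU : ConvexOn ℝ Set.univ U) : Monotone (sg U) := by
  intro a b hab
  rcases eq_or_lt_of_le hab with rfl | hab
  · exact le_rfl
  have h1 : sg U a ≤ (U b - U a) / (b - a) := sg_le_slope hU hab
  have h2 : (U a - U b) / (a - b) ≤ sg U b := slope_le_sg hU hab
  have h3 : (U b - U a) / (b - a) = (U a - U b) / (a - b) := by
    rw [div_eq_div_iff (by linarith) (by linarith)]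
    ring
  linarith

end sg

lemma tel_Ico (f : ℕ → ℝ) {u v : ℕ} (huv : u ≤ v) :
    ∑ j ∈ Finset.Ico u v, (f (j+1) - f j) = f v - f u := by
  rw [Finset.sum_Ico_eq_sub _ huv, Finset.sum_range_sub, Finset.sum_range_sub]
  ring

lemma abel_nonneg (g d : ℕ → ℝ) (N : ℕ)
    (hg : ∀ i j, i ≤ j → j < N + 1 → g j ≤ g i)
    (hD : ∀ k, k ≤ N + 1 → 0 ≤ ∑ i ∈ Finset.range k, d i)
    (hDn : ∑ i ∈ Finset.range (N+1), d i = 0) :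
    0 ≤ ∑ i ∈ Finset.range (N+1), g i * d i := by
  have step1 : ∑ i ∈ Finset.range (N+1), g i * d i
      = ∑ i ∈ Finset.range (N+1), (g i - g N) * d i := by
    have : ∑ i ∈ Finset.range (N+1), (g i - g N) * d i
        = ∑ i ∈ Finset.range (N+1), g i * d i - g N * ∑ i ∈ Finset.range (N+1), d i := by
      rw [Finset.mul_sum, ← Finset.sum_sub_distrib]
      exact Finset.sum_congr rfl fun i _ => by ring
    rw [this, hDn]
    ring
  have step2 : ∀ i, i ≤ N → g i - g N = ∑ j ∈ Finset.Ico i N, (g j - g (j+1)) := by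
    intro i hi
    have := tel_Ico (fun j => - g j) hi
    have e : ∑ j ∈ Finset.Ico i N, (g j - g (j+1))
        = ∑ j ∈ Finset.Ico i N, (-g (j+1) - (-g j)) :=
      Finset.sum_congr rfl fun j _ => by ring
    rw [e, this]
    ring
  have conv : ∀ i ∈ Finset.range (N+1), (g i - g N) * d i
      = ∑ j ∈ Finset.range N, (if i ≤ j then (g j - g (j+1)) * d i else 0) := by
    intro i hi
    have hi' : i ≤ N := by
      have := Finset.mem_range.mp hi; omega
    rw [step2 i hi', Finset.sum_mul]
    have e : ∀ j ∈ Finset.range N, (if i ≤ j then (g j - g (j+1)) * d i else 0)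
        = (if j ∈ Finset.Ico i N then (g j - g (j+1)) * d i else 0) := by
      intro j hj
      have hj' := Finset.mem_range.mp hj
      by_cases hij : i ≤ j
      · rw [if_pos hij, if_pos (Finset.mem_Ico.mpr ⟨hij, hj'⟩)]
      · rw [if_neg hij, if_neg (fun hc => hij (Finset.mem_Ico.mp hc).1)]
    rw [Finset.sum_congr rfl e, Finset.sum_ite_mem,
      Finset.inter_eq_right.mpr (fun j hj => Finset.mem_range.mpr (Finset.mem_Ico.mp hj).2)]
  rw [step1, Finset.sum_congr rfl conv, Finset.sum_comm]
  apply Finset.sum_nonneg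
  intro j hj
  have hj' := Finset.mem_range.mp hj
  have e : ∀ i ∈ Finset.range (N+1), (if i ≤ j then (g j - g (j+1)) * d i else 0)
      = (if i ∈ Finset.range (j+1) then (g j - g (j+1)) * d i else 0) := by
    intro i _
    by_cases hij : i ≤ j
    · rw [if_pos hij, if_pos (Finset.mem_range.mpr (by omega))]
    · rw [if_neg hij, if_neg (fun hc => hij (Nat.lt_succ_iff.mp (Finset.mem_range.mp hc)))]
  rw [Finset.sum_congr rfl e, Finset.sum_ite_mem,
    Finset.inter_eq_right.mpr (fun i hi => Finset.mem_range.mpr (by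
      have := Finset.mem_range.mp hi; omega)), ← Finset.mul_sum]
  have h1 : g (j+1) ≤ g j := hg j (j+1) (by omega) (by omega)
  have h2 : 0 ≤ ∑ i ∈ Finset.range (j+1), d i := hD (j+1) (by omega)
  nlinarith

lemma psum_eq_range {n : ℕ} (x : Fin n → ℝ) {k : ℕ} (hk : k ≤ n) :
    psum x k = ∑ i ∈ Finset.range k, (if h : i < n then x ⟨i, h⟩ else 0) := by
  induction k with
  | zero => simp [psum_zero]
  | succ k ih =>
    have hk' : k < n := by omega
    rw [psum_succ x hk', Finset.sum_range_succ, ih (by omega), dif_pos hk']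

lemma convex_sum_le {n : ℕ} {p₁ p₂ : Fin n → ℝ}
    (hp₁ : Antitone p₁)
    (hmaj : ∀ k, psum p₁ k ≤ psum p₂ k) (htot : ∑ i, p₁ i = ∑ i, p₂ i)
    {U : ℝ → ℝ} (hU : ConvexOn ℝ Set.univ U) :
    ∑ i, U (p₁ i) ≤ ∑ i, U (p₂ i) := by
  rcases Nat.eq_zero_or_pos n with rfl | hn
  · simp
  obtain ⟨N, rfl⟩ : ∃ N, n = N + 1 := ⟨n - 1, by omega⟩
  set q1 : ℕ → ℝ := fun j => if h : j < N + 1 then p₁ ⟨j, h⟩ else 0 with hq1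
  set q2 : ℕ → ℝ := fun j => if h : j < N + 1 then p₂ ⟨j, h⟩ else 0 with hq2
  set d : ℕ → ℝ := fun j => q2 j - q1 j with hd
  set g : ℕ → ℝ := fun j => sg U (q1 j) with hg
  have habel : 0 ≤ ∑ i ∈ Finset.range (N+1), g i * d i := by
    apply abel_nonneg
    · intro i j hij hj
      apply sg_mono hU
      simp only [hq1]
      rw [dif_pos hj, dif_pos (by omega : i < N + 1)]
      exact hp₁ (by simp [Fin.le_def]; omega)
    · intro k hk
      have : ∑ i ∈ Finset.range k, d i = psum p₂ k - psum p₁ k := by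
        rw [psum_eq_range p₁ hk, psum_eq_range p₂ hk, ← Finset.sum_sub_distrib]
      rw [this]
      linarith [hmaj k]
    · have : ∑ i ∈ Finset.range (N+1), d i = psum p₂ (N+1) - psum p₁ (N+1) := by
        rw [psum_eq_range p₁ le_rfl, psum_eq_range p₂ le_rfl, ← Finset.sum_sub_distrib]
      rw [this, psum_of_le _ le_rfl, psum_of_le _ le_rfl, htot]
      ring
  have key : ∑ i ∈ Finset.range (N+1), U (q1 i) ≤ ∑ i ∈ Finset.range (N+1), U (q2 i) := by
    have hsub : ∀ i ∈ Finset.range (N+1), U (q1 i) + g i * d i ≤ U (q2 i) := by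
      intro i _
      have h := sg_subgrad hU (q1 i) (q2 i)
      have e : g i * d i = sg U (q1 i) * (q2 i - q1 i) := rfl
      rw [e]
      exact h
    calc ∑ i ∈ Finset.range (N+1), U (q1 i)
        ≤ ∑ i ∈ Finset.range (N+1), (U (q1 i) + g i * d i) := by
          rw [Finset.sum_add_distrib]
          linarith
      _ ≤ ∑ i ∈ Finset.range (N+1), U (q2 i) := Finset.sum_le_sum hsub
  have e1 : ∑ i ∈ Finset.range (N+1), U (q1 i) = ∑ i, U (p₁ i) := by
    rw [← Fin.sum_univ_eq_sum_range (fun j => U (q1 j)) (N+1)]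
    apply Finset.sum_congr rfl
    intro i _
    simp [hq1, i.isLt, Fin.is_le i]
  have e2 : ∑ i ∈ Finset.range (N+1), U (q2 i) = ∑ i, U (p₂ i) := by
    rw [← Fin.sum_univ_eq_sum_range (fun j => U (q2 j)) (N+1)]
    apply Finset.sum_congr rfl
    intro i _
    simp [hq2, i.isLt, Fin.is_le i]
  rw [e1, e2] at key
  exact key

lemma psum_add {n : ℕ} (x z : Fin n → ℝ) (k : ℕ) :
    psum (fun i => x i + z i) k = psum x k + psum z k := by
  unfold psum
  rw [← Finset.sum_add_distrib]
  apply Finset.sum_congr rfl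
  intro i _
  by_cases hi : (i : ℕ) < k <;> simp [hi]


/-- Robustness to inconsistencies: a more faithful ranking yields a pointwise larger
separable convex utility after isotonic projection. -/
theorem faithful_ranking_better {n : ℕ} (R z : Fin n → ℝ)
    (π₁ π₂ : Equiv.Perm (Fin n))
    (hfaithful : Maj (fun i => R (π₁ i)) (fun i => R (π₂ i)))
    (p₁ p₂ : Fin n → ℝ)
    (h₁ : IsProj (IsoCone n) (fun i => R (π₁ i) + z i) p₁)
    (h₂ : IsProj (IsoCone n) (fun i => R (π₂ i) + z i) p₂)
    (U : ℝ → ℝ) (hU : ConvexOn ℝ Set.univ U) :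
    ∑ i, U (p₂ i) ≤ ∑ i, U (p₁ i) := by
  have htotA : ∑ i, (R (π₁ i) + z i) = ∑ i, (R (π₂ i) + z i) := by
    rw [Finset.sum_add_distrib, Finset.sum_add_distrib, hfaithful.2]
  have hmaj : ∀ k, psum (fun i => R (π₂ i) + z i) k ≤ psum (fun i => R (π₁ i) + z i) k := by
    intro k
    rcases lt_or_ge k n with hk | hk
    · rw [psum_add, psum_add]
      linarith [hfaithful.1 k hk]
    · rw [psum_of_le _ hk, psum_of_le _ hk, htotA]
  have hp : ∀ k, psum p₂ k ≤ psum p₁ k := proj_psum_mono h₁ h₂ hmaj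
  have htot : ∑ i, p₂ i = ∑ i, p₁ i := by
    rw [psum_total_proj h₁, psum_total_proj h₂, htotA]
  exact convex_sum_le h₂.1 hp htot hU
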